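/- The image of the polynomial map G_X : ℂ³ → ℂ⁴ equals the quadric hypersurface X_Q: G_X(ℂ³) = {(p,q,r,s) ∈ ℂ⁴ : r² = q·s}. -/
import Mathlib

open Polynomial in
lemma cubic_surj (a b p : ℂ) : ∃ t : ℂ, 2 * t + (a - t) * (p - a * t + t ^ 2) / 2 = b := by
  set P : ℂ[X] := C 2 * X + (C a - X) * (C p - C a * X + X ^ 2) * C (1/2) - C b with hP
  have hdeg : P.degree = 3 := by
    rw [hP]; compute_degree!
  obtain ⟨z, hz⟩ := Complex.isAlgClosed.exists_root P (by rw [hdeg]; norm_num)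
  refine ⟨z, ?_⟩
  have := hz
  simp only [Polynomial.IsRoot, hP, Polynomial.eval_sub, Polynomial.eval_add,
    Polynomial.eval_mul, Polynomial.eval_C, Polynomial.eval_X, Polynomial.eval_pow] at this
  linear_combination this

lemma sq_exists (c : ℂ) : ∃ z : ℂ, z ^ 2 = c :=
  IsAlgClosed.exists_pow_nat_eq c (n := 2) (by norm_num)

lemma vw_exists (t m : ℂ) : ∃ v w : ℂ, v * w = t ∧ v ^ 2 + w ^ 2 = m := by
  obtain ⟨σ, hσ⟩ := sq_exists (m + 2 * t)
  obtain ⟨δ, hδ⟩ := sq_exists (σ ^ 2 - 4 * t)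
  exact ⟨(σ + δ) / 2, (σ - δ) / 2, by linear_combination -hδ/4, by linear_combination hδ/2 + hσ⟩

/-- The polynomial parametrization `G_X : ℂ³ → ℂ⁴`. -/
noncomputable def GX (u v w : ℂ) : ℂ × ℂ × ℂ × ℂ :=
  (v ^ 2 + u * v * w + w ^ 2,
   (u + v * w) ^ 2,
   (u + v * w) * (2 * v * w + u * (v ^ 2 + w ^ 2) / 2),
   (2 * v * w + u * (v ^ 2 + w ^ 2) / 2) ^ 2)

/-- The image of `G_X` equals the quadric hypersurface `X_Q = {(p,q,r,s) : r² = q·s}`. -/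
theorem image_GX_eq_quadric :
    {x : ℂ × ℂ × ℂ × ℂ | ∃ u v w : ℂ, GX u v w = x}
      = {x : ℂ × ℂ × ℂ × ℂ | x.2.2.1 ^ 2 = x.2.1 * x.2.2.2} := by
  ext ⟨p, q, r, s⟩
  simp only [Set.mem_setOf_eq]
  constructor
  · rintro ⟨u, v, w, h⟩
    simp only [GX, Prod.mk.injEq] at h
    obtain ⟨h1, h2, h3, h4⟩ := h
    subst h2 h3 h4
    ring
  · rintro hqs
    obtain ⟨a, b, ha, hab, hb⟩ : ∃ a b : ℂ, a ^ 2 = q ∧ a * b = r ∧ b ^ 2 = s := by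
      by_cases hq : q = 0
      · obtain ⟨b, hb⟩ := sq_exists s
        refine ⟨0, b, by simp [hq], ?_, hb⟩
        have : r ^ 2 = 0 := by rw [hqs, hq, zero_mul]
        simpa using (pow_eq_zero_iff (n := 2) (by norm_num)).1 this |>.symm
      · obtain ⟨a, ha⟩ := sq_exists q
        have ha0 : a ≠ 0 := by rintro rfl; simp at ha; exact hq ha.symm
        refine ⟨a, r / a, ha, by field_simp, ?_⟩
        rw [div_pow, ha, hqs]
        field_simp
    obtain ⟨t, ht⟩ := cubic_surj a b p
    obtain ⟨v, w, hvw, hm⟩ := vw_exists t (p - a * t + t ^ 2)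
    refine ⟨a - t, v, w, ?_⟩
    have key : 2 * v * w + (a - t) * (v ^ 2 + w ^ 2) / 2 = b := by
      linear_combination 2 * hvw + (a - t) / 2 * hm + ht
    have hA : a - t + v * w = a := by linear_combination hvw
    simp only [GX, Prod.mk.injEq]
    refine ⟨?_, ?_, ?_, ?_⟩
    · linear_combination hm + (a - t) * hvw
    · rw [hA, ha]
    · rw [hA, key, hab]
    · rw [key, hb]
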